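/- arXiv:2510.05677 — 2 statements merged into one kernel-verified Lean document; each statement's English description precedes it below -/
import Mathlib

section
/- Let D₁, D₂ be two open disks in the plane with D₁ ∩ D₂ ≠ ∅, with neither D₁ ⊆ D₂ nor D₂ ⊆ D₁. Let I, J be the two intersection points of the boundary circles ∂D₁ and ∂D₂, let α₁ be the arc of ∂D₁ between I and J disjoint from D₂, and α₂ the arc of ∂D₂ between I and J disjoint from D₁. If (A₁,B₁) is an open segment with endpoints A₁, B₁ ∈ α₁ and (A₂,B₂) an open segment with endpoints in α₂, and the two open segments intersect, then both segments coincide with the open segment (I,J). -/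
/-!
The power of a point with respect to `∂D₁` minus its power with respect to `∂D₂` is an affine
function of the point, vanishing exactly on the radical axis `IJ`. It is `≤ 0` on `α₁` and `≥ 0`
on `α₂`, so at a common point of the two open segments it is both a positive combination of
nonpositive values and of nonnegative values. Hence it vanishes at all four endpoints, which
therefore lie on both circles, i.e. in `{I, J}`.
-/

open Metric

namespace AffineMap

variable {𝕜 E : Type*} [Field 𝕜] [LinearOrder 𝕜] [IsStrictOrderedRing 𝕜] [AddCommGroup E]
  [Module 𝕜 E] (g : E →ᵃ[𝕜] 𝕜) {x y p : E}

theorem nonneg_of_mem_openSegment (hp : p ∈ openSegment 𝕜 x y) (hx : 0 ≤ g x) (hy : 0 ≤ g y) :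
    0 ≤ g p :=
  ((convex_Ici 0).affine_preimage g).openSegment_subset hx hy hp

theorem eq_zero_of_mem_openSegment_of_nonpos (hp : p ∈ openSegment 𝕜 x y) (hx : g x ≤ 0)
    (hy : g y ≤ 0) (hgp : 0 ≤ g p) : g x = 0 ∧ g y = 0 := by
  obtain ⟨a, b, ha, hb, hab, rfl⟩ := hp
  rw [Convex.combo_affine_apply hab, smul_eq_mul, smul_eq_mul] at hgp
  have hax : a * g x = 0 := by nlinarith [mul_nonpos_of_nonneg_of_nonpos hb.le hy]
  have hby : b * g y = 0 := by nlinarith [mul_nonpos_of_nonneg_of_nonpos ha.le hx]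
  exact ⟨(mul_eq_zero.1 hax).resolve_left ha.ne', (mul_eq_zero.1 hby).resolve_left hb.ne'⟩

end AffineMap

section RadicalAxis

variable {E : Type*} [NormedAddCommGroup E] [InnerProductSpace ℝ E]

noncomputable def radicalFn (c₁ : E) (r₁ : ℝ) (c₂ : E) (r₂ : ℝ) : E →ᵃ[ℝ] ℝ where
  toFun z := (dist z c₁ ^ 2 - r₁ ^ 2) - (dist z c₂ ^ 2 - r₂ ^ 2)
  linear := (2 : ℝ) • innerₗ E (c₂ - c₁)
  map_vadd' p v := by
    simp only [vadd_eq_add, dist_eq_norm, LinearMap.smul_apply, innerₗ_apply_apply, smul_eq_mul,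
      add_sub_assoc, norm_add_sq_real, inner_sub_left, inner_sub_right]
    linear_combination 2 * real_inner_comm v c₁ - 2 * real_inner_comm v c₂

variable {c₁ c₂ z : E} {r₁ r₂ : ℝ}

theorem radicalFn_apply :
    radicalFn c₁ r₁ c₂ r₂ z = (dist z c₁ ^ 2 - r₁ ^ 2) - (dist z c₂ ^ 2 - r₂ ^ 2) := rfl

theorem radicalFn_swap : radicalFn c₂ r₂ c₁ r₁ z = -radicalFn c₁ r₁ c₂ r₂ z := by
  simp only [radicalFn_apply]; ring

theorem radicalFn_nonpos (hr₂ : 0 ≤ r₂) (hz : z ∈ sphere c₁ r₁ \ ball c₂ r₂) :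
    radicalFn c₁ r₁ c₂ r₂ z ≤ 0 := by
  obtain ⟨hz₁, hz₂⟩ := hz
  rw [mem_sphere] at hz₁
  rw [mem_ball, not_lt] at hz₂
  rw [radicalFn_apply, hz₁]
  nlinarith

theorem mem_sphere_of_radicalFn_eq_zero (hr₂ : 0 ≤ r₂) (hz : z ∈ sphere c₁ r₁)
    (h : radicalFn c₁ r₁ c₂ r₂ z = 0) : z ∈ sphere c₂ r₂ := by
  rw [mem_sphere] at hz ⊢
  rw [radicalFn_apply, hz, sub_self, zero_sub, neg_eq_zero, sub_eq_zero] at h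
  exact (sq_eq_sq₀ dist_nonneg hr₂).1 h

theorem openSegment_endpoints_mem_sphere (hr₁ : 0 ≤ r₁) (hr₂ : 0 ≤ r₂) {A₁ B₁ A₂ B₂ : E}
    (hA₁ : A₁ ∈ sphere c₁ r₁ \ ball c₂ r₂) (hB₁ : B₁ ∈ sphere c₁ r₁ \ ball c₂ r₂)
    (hA₂ : A₂ ∈ sphere c₂ r₂ \ ball c₁ r₁) (hB₂ : B₂ ∈ sphere c₂ r₂ \ ball c₁ r₁)
    (hmeet : (openSegment ℝ A₁ B₁ ∩ openSegment ℝ A₂ B₂).Nonempty) :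
    A₁ ∈ sphere c₂ r₂ ∧ B₁ ∈ sphere c₂ r₂ := by
  obtain ⟨P, hP₁, hP₂⟩ := hmeet
  set g := radicalFn c₁ r₁ c₂ r₂
  have hg₂ : ∀ z ∈ sphere c₂ r₂ \ ball c₁ r₁, 0 ≤ g z := fun z hz ↦ by
    have := radicalFn_nonpos hr₁ hz
    rwa [radicalFn_swap, neg_nonpos] at this
  have hgP : 0 ≤ g P := g.nonneg_of_mem_openSegment hP₂ (hg₂ A₂ hA₂) (hg₂ B₂ hB₂)
  obtain ⟨hgA₁, hgB₁⟩ := g.eq_zero_of_mem_openSegment_of_nonpos hP₁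
    (radicalFn_nonpos hr₂ hA₁) (radicalFn_nonpos hr₂ hB₁) hgP
  exact ⟨mem_sphere_of_radicalFn_eq_zero hr₂ hA₁.1 hgA₁,
    mem_sphere_of_radicalFn_eq_zero hr₂ hB₁.1 hgB₁⟩

end RadicalAxis

theorem openSegment_eq_of_mem_pair {𝕜 E : Type*} [Semiring 𝕜] [PartialOrder 𝕜]
    [AddCommMonoid E] [SMul 𝕜 E] {A B I J : E} (hAB : A ≠ B)
    (hA : A = I ∨ A = J) (hB : B = I ∨ B = J) : openSegment 𝕜 A B = openSegment 𝕜 I J := by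
  rcases hA with rfl | rfl <;> rcases hB with rfl | rfl
  exacts [absurd rfl hAB, rfl, openSegment_symm 𝕜 _ _, absurd rfl hAB]

theorem stmt_1_general (c₁ c₂ I J A₁ B₁ A₂ B₂ : ℂ) (r₁ r₂ : ℝ)
    (h12 : ¬ Metric.ball c₁ r₁ ⊆ Metric.ball c₂ r₂)
    (hIJ : I ≠ J)
    (hI : I ∈ Metric.sphere c₁ r₁ ∩ Metric.sphere c₂ r₂)
    (hJ : J ∈ Metric.sphere c₁ r₁ ∩ Metric.sphere c₂ r₂)
    (hA₁ : A₁ ∈ Metric.sphere c₁ r₁ \ Metric.ball c₂ r₂)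
    (hB₁ : B₁ ∈ Metric.sphere c₁ r₁ \ Metric.ball c₂ r₂)
    (hA₂ : A₂ ∈ Metric.sphere c₂ r₂ \ Metric.ball c₁ r₁)
    (hB₂ : B₂ ∈ Metric.sphere c₂ r₂ \ Metric.ball c₁ r₁)
    (hAB₁ : A₁ ≠ B₁) (hAB₂ : A₂ ≠ B₂)
    (hmeet : (openSegment ℝ A₁ B₁ ∩ openSegment ℝ A₂ B₂).Nonempty) :
    openSegment ℝ A₁ B₁ = openSegment ℝ I J ∧ openSegment ℝ A₂ B₂ = openSegment ℝ I J := by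
  have hr₁ : 0 ≤ r₁ := dist_nonneg.trans_eq hI.1
  have hr₂ : 0 ≤ r₂ := dist_nonneg.trans_eq hI.2
  have hc : c₁ ≠ c₂ := by
    rintro rfl
    obtain rfl : r₁ = r₂ := hI.1.symm.trans hI.2
    exact h12 subset_rfl
  have mem_IJ : ∀ z, z ∈ sphere c₁ r₁ → z ∈ sphere c₂ r₂ → z = I ∨ z = J := fun z hz₁ hz₂ ↦
    EuclideanGeometry.eq_of_dist_eq_of_dist_eq_of_finrank_eq_two Complex.finrank_real_complex
      hc hIJ hI.1 hJ.1 hz₁ hI.2 hJ.2 hz₂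
  obtain ⟨hA₁₂, hB₁₂⟩ := openSegment_endpoints_mem_sphere hr₁ hr₂ hA₁ hB₁ hA₂ hB₂ hmeet
  obtain ⟨hA₂₁, hB₂₁⟩ := openSegment_endpoints_mem_sphere hr₂ hr₁ hA₂ hB₂ hA₁ hB₁
    (Set.inter_comm _ _ ▸ hmeet)
  exact ⟨openSegment_eq_of_mem_pair hAB₁ (mem_IJ A₁ hA₁.1 hA₁₂) (mem_IJ B₁ hB₁.1 hB₁₂),
    openSegment_eq_of_mem_pair hAB₂ (mem_IJ A₂ hA₂₁ hA₂.1) (mem_IJ B₂ hB₂₁ hB₂.1)⟩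

/-- Two overlapping disks, neither contained in the other; `I, J` the intersection
points of their boundary circles; `α₁ = ∂D₁ \ D₂` and `α₂ = ∂D₂ \ D₁` the arcs of each
boundary circle disjoint from the other disk.  If an open segment with endpoints on `α₁`
meets an open segment with endpoints on `α₂`, both coincide with the open segment `(I,J)`. -/
theorem stmt_1 (c₁ c₂ I J A₁ B₁ A₂ B₂ : ℂ) (r₁ r₂ : ℝ) (hr₁ : 0 < r₁) (hr₂ : 0 < r₂)
    (hinter : (Metric.ball c₁ r₁ ∩ Metric.ball c₂ r₂).Nonempty)
    (h12 : ¬ Metric.ball c₁ r₁ ⊆ Metric.ball c₂ r₂)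
    (h21 : ¬ Metric.ball c₂ r₂ ⊆ Metric.ball c₁ r₁)
    (hIJ : I ≠ J)
    (hI : I ∈ Metric.sphere c₁ r₁ ∩ Metric.sphere c₂ r₂)
    (hJ : J ∈ Metric.sphere c₁ r₁ ∩ Metric.sphere c₂ r₂)
    (hA₁ : A₁ ∈ Metric.sphere c₁ r₁ \ Metric.ball c₂ r₂)
    (hB₁ : B₁ ∈ Metric.sphere c₁ r₁ \ Metric.ball c₂ r₂)
    (hA₂ : A₂ ∈ Metric.sphere c₂ r₂ \ Metric.ball c₁ r₁)
    (hB₂ : B₂ ∈ Metric.sphere c₂ r₂ \ Metric.ball c₁ r₁)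
    (hAB₁ : A₁ ≠ B₁) (hAB₂ : A₂ ≠ B₂)
    (hmeet : (openSegment ℝ A₁ B₁ ∩ openSegment ℝ A₂ B₂).Nonempty) :
    openSegment ℝ A₁ B₁ = openSegment ℝ I J ∧ openSegment ℝ A₂ B₂ = openSegment ℝ I J :=
  stmt_1_general c₁ c₂ I J A₁ B₁ A₂ B₂ r₁ r₂ h12 hIJ hI hJ hA₁ hB₁ hA₂ hB₂ hAB₁ hAB₂ hmeet
end

section
/- Let f be holomorphic on the sector S = {z ∈ ℂ : |z| > r, |arg z − θ| < α} with 0 < α < π, and suppose f(z) ~ λ z^β as |z| → ∞ in S, for some λ ∈ ℂ*, β ∈ ℂ and a fixed branch of z^β on S. Then for every α′ < α, f′(z) ~ (β/z) · f(z) as |z| → ∞ within the subsector {|arg z − θ| < α′}. -/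
open Filter Topology Metric InnerProductGeometry Real

/-!
Write `f = g · λ e^{βL}`. Since `L' = 1/z`, we get `z f'/f = β + z g'/g`, and as `g → 1` it
suffices that `z g'(z) → 0` on the smaller sector. A point `z` of the smaller sector is the centre
of a disc of radius `c|z|` contained in the larger one, with `c > 0` depending only on `α - α'`
(such a disc subtends an angle at most `π c` at the origin); for `|z|` large, Cauchy's estimate
for `g - 1` on this disc gives `|g'(z)| ≤ o(1) / (c|z|)`.
-/

lemma half_norm_le_norm_of_norm_sub_le {E : Type*} [SeminormedAddCommGroup E] {z w : E} {c : ℝ}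
    (hc : c ≤ 1 / 2) (h : ‖w - z‖ ≤ c * ‖z‖) : ‖z‖ / 2 ≤ ‖w‖ := by
  have := norm_sub_norm_le z w
  rw [norm_sub_rev] at this
  nlinarith [norm_nonneg z]

lemma eventually_lt_norm_inf_principal {E : Type*} [Norm E] (a : ℝ) (T : Set E) :
    ∀ᶠ z in comap (‖·‖) atTop ⊓ 𝓟 T, a < ‖z‖ :=
  (tendsto_comap.eventually (eventually_gt_atTop a)).filter_mono inf_le_left

namespace Complex

lemma abs_arg_le_pi_mul_norm_sub_one {d : ℂ} (hd : d ≠ 0) : |arg d| ≤ π * ‖d - 1‖ := by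
  have hd' : 0 < ‖d‖ := norm_pos_iff.2 hd
  set u : ℂ := ((‖d‖⁻¹ : ℝ) : ℂ) * d with hu_def
  have hu : ‖u‖ = 1 := by
    rw [hu_def, norm_mul, norm_real, Real.norm_eq_abs, abs_inv, abs_norm, inv_mul_cancel₀ hd'.ne']
  have hu1 : ‖u - 1‖ ≤ 2 * ‖d - 1‖ := calc
    ‖u - 1‖ ≤ ‖u - d‖ + ‖d - 1‖ := norm_sub_le_norm_sub_add_norm_sub _ _ _
    _ = |‖d‖ - ‖(1 : ℂ)‖| + ‖d - 1‖ := by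
      have hud : u - d = ((‖d‖⁻¹ - 1 : ℝ) : ℂ) * d := by rw [hu_def]; push_cast; ring
      rw [hud, norm_mul, norm_real, Real.norm_eq_abs, ← abs_norm d, ← abs_mul, abs_norm, sub_mul,
        inv_mul_cancel₀ hd'.ne', one_mul, norm_one, abs_sub_comm]
    _ ≤ 2 * ‖d - 1‖ := by linarith [abs_norm_sub_norm_le d 1]
  calc |arg d| = angle u 1 := by
        rw [angle_one_right (norm_pos_iff.1 (hu ▸ one_pos)), arg_real_mul d (inv_pos.2 hd')]
    _ ≤ π / 2 * ‖u - 1‖ := angle_le_mul_norm_sub hu norm_one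
    _ ≤ π * ‖d - 1‖ := by nlinarith [pi_pos]

lemma angle_le_pi_mul_norm_sub_div {w z : ℂ} (hw : w ≠ 0) (hz : z ≠ 0) :
    angle w z ≤ π * (‖w - z‖ / ‖z‖) := by
  rw [angle_eq_abs_arg hw hz, ← norm_div, ← div_sub_one hz]
  exact abs_arg_le_pi_mul_norm_sub_one (div_ne_zero hw hz)

lemma abs_arg_le_abs_arg_add_angle {w z : ℂ} (hw : w ≠ 0) (hz : z ≠ 0) :
    |arg w| ≤ |arg z| + angle w z := by
  rw [← angle_one_right hw, ← angle_one_right hz, add_comm]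
  exact angle_le_angle_add_angle w z 1

def sector (θ α : ℝ) : Set ℂ := {z | |arg (z * exp (-(θ : ℂ) * I))| < α}

lemma ball_subset_sector {θ α α' c : ℝ} {z : ℂ} (hz : z ∈ sector θ α') (hz0 : z ≠ 0)
    (hc : c ≤ 1) (hcα : π * c ≤ α - α') : ball z (c * ‖z‖) ⊆ sector θ α := by
  intro w hw
  have hwz : ‖w - z‖ / ‖z‖ < c := by
    rw [div_lt_iff₀ (norm_pos_iff.2 hz0)]
    exact mem_ball_iff_norm.1 hw
  have hw0 : w ≠ 0 := by
    rintro rfl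
    rw [zero_sub, norm_neg, div_self (norm_ne_zero_iff.2 hz0)] at hwz
    linarith
  have he : exp (-(θ : ℂ) * I) ≠ 0 := exp_ne_zero _
  calc |arg (w * exp (-(θ : ℂ) * I))|
      ≤ |arg (z * exp (-(θ : ℂ) * I))| + angle w z := by
        simpa using abs_arg_le_abs_arg_add_angle (mul_ne_zero hw0 he) (mul_ne_zero hz0 he)
    _ < α' + π * c := by
        gcongr
        · exact hz
        · exact (angle_le_pi_mul_norm_sub_div hw0 hz0).trans_lt (by gcongr)
    _ ≤ α := by linarith

lemma ball_subset_norm_gt_inter_sector {r θ α α' c : ℝ} {z : ℂ} (hz : z ∈ sector θ α')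
    (hz0 : z ≠ 0) (hr : 2 * r < ‖z‖) (hc : c ≤ 1 / 2) (hcα : π * c ≤ α - α') :
    ball z (c * ‖z‖) ⊆ {w | r < ‖w‖} ∩ sector θ α := fun w hw =>
  ⟨show r < ‖w‖ by linarith [half_norm_le_norm_of_norm_sub_le hc (mem_ball_iff_norm.1 hw).le],
    ball_subset_sector hz hz0 (by linarith) hcα hw⟩

lemma hasDerivAt_inv_of_exp_eventuallyEq {L : ℂ → ℂ} {z : ℂ} (hc : ContinuousAt L z)
    (h : ∀ᶠ w in 𝓝 z, exp (L w) = w) : HasDerivAt L z⁻¹ z := by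
  have hz : exp (L z) = z := h.self_of_nhds
  have hexp := hasStrictDerivAt_exp (L z)
  rw [hz] at hexp
  exact (hexp.of_local_left_inverse hc (hz ▸ exp_ne_zero _) h).hasDerivAt

lemma logDeriv_const_mul_exp_mul {L : ℂ → ℂ} {z lam β : ℂ} (hlam : lam ≠ 0) (hz : z ≠ 0)
    (hL : HasDerivAt L z⁻¹ z) : logDeriv (fun w => lam * exp (β * L w)) z = β / z := by
  rw [logDeriv_apply, (((hL.const_mul β).cexp).const_mul lam).deriv]
  field_simp

lemma tendsto_mul_deriv_zero_of_tendsto {g : ℂ → ℂ} {U T : Set ℂ} {l : ℂ} {c : ℝ} (hc : 0 < c)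
    (hc1 : c ≤ 1) (hg : DifferentiableOn ℂ g U)
    (hlim : Tendsto g (comap (‖·‖) atTop ⊓ 𝓟 U) (𝓝 l))
    (hball : ∀ᶠ z in comap (‖·‖) atTop ⊓ 𝓟 T, ball z (c * ‖z‖) ⊆ U) :
    Tendsto (fun z => z * deriv g z) (comap (‖·‖) atTop ⊓ 𝓟 T) (𝓝 0) := by
  rw [Metric.tendsto_nhds]
  intro ε hε
  obtain ⟨R, -, hR⟩ := ((atTop_basis.comap (‖·‖)).inf_principal U).tendsto_left_iff.1 hlim
    (ball l (c * ε / 4)) (ball_mem_nhds l (by positivity))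
  filter_upwards [hball, eventually_lt_norm_inf_principal (max (2 * R) 0) T] with z hzU hzR
  have hz : 0 < ‖z‖ := (le_max_right _ _).trans_lt hzR
  have hsub : closedBall z (c / 2 * ‖z‖) ⊆ U :=
    (closedBall_subset_ball (by nlinarith)).trans hzU
  have hderiv : ‖deriv g z‖ ≤ c * ε / 4 / (c / 2 * ‖z‖) := by
    rw [← deriv_sub_const l]
    refine norm_deriv_le_of_forall_mem_sphere_norm_le (by positivity)
      ((hg.sub_const l).diffContOnCl_ball hsub) fun w hw => ?_
    have hwR : R ≤ ‖w‖ := by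
      have := half_norm_le_norm_of_norm_sub_le (by linarith) (mem_sphere_iff_norm.1 hw).le
      linarith [le_max_left (2 * R) 0]
    exact (mem_ball_iff_norm.1 (hR ⟨hwR, hsub (sphere_subset_closedBall hw)⟩)).le
  calc dist (z * deriv g z) 0 = ‖z‖ * ‖deriv g z‖ := by rw [dist_zero_right, norm_mul]
    _ ≤ ‖z‖ * (c * ε / 4 / (c / 2 * ‖z‖)) := by gcongr
    _ = ε / 2 := by field_simp; ring
    _ < ε := half_lt_self hε

lemma tendsto_mul_logDeriv_zero_of_tendsto {g : ℂ → ℂ} {U T : Set ℂ} {l : ℂ} {c : ℝ}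
    (hc : 0 < c) (hc1 : c ≤ 1) (hg : DifferentiableOn ℂ g U)
    (hlim : Tendsto g (comap (‖·‖) atTop ⊓ 𝓟 U) (𝓝 l)) (hl : l ≠ 0)
    (hball : ∀ᶠ z in comap (‖·‖) atTop ⊓ 𝓟 T, ball z (c * ‖z‖) ⊆ U) :
    Tendsto (fun z => z * logDeriv g z) (comap (‖·‖) atTop ⊓ 𝓟 T) (𝓝 0) := by
  have hTU : comap (‖·‖) atTop ⊓ 𝓟 T ≤ comap (‖·‖) atTop ⊓ 𝓟 U :=
    le_inf inf_le_left <| le_principal_iff.2 <| by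
      filter_upwards [hball, eventually_lt_norm_inf_principal 0 T] with z hzU hz
      exact hzU (mem_ball_self (by positivity))
  have := (tendsto_mul_deriv_zero_of_tendsto hc hc1 hg hlim hball).div (hlim.mono_left hTU) hl
  rw [zero_div] at this
  exact this.congr fun z => mul_div_assoc _ _ _

lemma mul_logDeriv_eq_add_mul_logDeriv_div {f L : ℂ → ℂ} {z lam β : ℂ} (hlam : lam ≠ 0)
    (hz : z ≠ 0) (hL : HasDerivAt L z⁻¹ z) (hf : DifferentiableAt ℂ f z) (hfz : f z ≠ 0) :
    z * logDeriv f z = β + z * logDeriv (fun w => f w / (lam * exp (β * L w))) z := by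
  rw [logDeriv_div (g := fun w => lam * exp (β * L w)) z hfz (mul_ne_zero hlam (exp_ne_zero _)) hf
    (((hL.const_mul β).cexp.const_mul lam).differentiableAt), logDeriv_const_mul_exp_mul hlam hz hL]
  field_simp
  ring

end Complex

open Complex

open Filter in
theorem stmt_10_general (r θ α : ℝ)
    (f L : ℂ → ℂ) (lam β : ℂ) (hlam : lam ≠ 0)
    (S : Set ℂ)
    (hS : S = {z : ℂ | r < ‖z‖ ∧
      |Complex.arg (z * Complex.exp (-(θ : ℂ) * Complex.I))| < α})
    (hf : DifferentiableOn ℂ f S)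
    (hLc : ContinuousOn L S) (hL : ∀ z ∈ S, Complex.exp (L z) = z)
    (hasym : Tendsto (fun z => f z / (lam * Complex.exp (β * L z)))
      (comap (fun z : ℂ => ‖z‖) atTop ⊓ 𝓟 S) (nhds 1)) :
    ∀ α' : ℝ, α' < α →
      Tendsto (fun z => z * deriv f z / f z)
        (comap (fun z : ℂ => ‖z‖) atTop ⊓
          𝓟 {z : ℂ | r < ‖z‖ ∧
            |Complex.arg (z * Complex.exp (-(θ : ℂ) * Complex.I))| < α'})
        (nhds β) := by
  intro α' hα'
  set T := {z : ℂ | r < ‖z‖ ∧ |arg (z * exp (-(θ : ℂ) * I))| < α'}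
  set g : ℂ → ℂ := fun z => f z / (lam * exp (β * L z))
  obtain ⟨c, hc0, hc, hcα⟩ : ∃ c : ℝ, 0 < c ∧ c ≤ 1 / 2 ∧ π * c ≤ α - α' :=
    ⟨min (1 / 2) ((α - α') / π), lt_min one_half_pos (div_pos (sub_pos.2 hα') pi_pos),
      min_le_left _ _, (le_div_iff₀' pi_pos).1 (min_le_right _ _)⟩
  have hball : ∀ᶠ z in comap (‖·‖) atTop ⊓ 𝓟 T, ball z (c * ‖z‖) ⊆ interior S := by
    filter_upwards [eventually_lt_norm_inf_principal (max (2 * r) 0) T,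
      mem_inf_of_right (mem_principal_self T)] with z hzr hzT
    exact isOpen_ball.subset_interior_iff.2 <| hS ▸ ball_subset_norm_gt_inter_sector hzT.2
      (norm_pos_iff.1 ((le_max_right _ _).trans_lt hzr)) ((le_max_left _ _).trans_lt hzr) hc hcα
  have hLderiv : ∀ z ∈ interior S, HasDerivAt L z⁻¹ z := fun z hz =>
    hasDerivAt_inv_of_exp_eventuallyEq (hLc.continuousAt (mem_interior_iff_mem_nhds.1 hz))
      (eventually_of_mem (mem_interior_iff_mem_nhds.1 hz) hL)
  have hg : DifferentiableOn ℂ g (interior S) := fun z hz =>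
    ((hf.differentiableAt (mem_interior_iff_mem_nhds.1 hz)).div
      (((hLderiv z hz).const_mul β).cexp.const_mul lam).differentiableAt
      (mul_ne_zero hlam (exp_ne_zero _))).differentiableWithinAt
  have hlogDeriv : Tendsto (fun z => z * logDeriv g z) (comap (‖·‖) atTop ⊓ 𝓟 T) (𝓝 0) :=
    tendsto_mul_logDeriv_zero_of_tendsto hc0 (by linarith)
      hg (hasym.mono_left (inf_le_inf_left _ (principal_mono.2 interior_subset))) one_ne_zero hball
  have hgT : ∀ᶠ z in comap (‖·‖) atTop ⊓ 𝓟 T, g z ≠ 0 :=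
    (hasym.eventually_ne one_ne_zero).filter_mono
      (inf_le_inf_left _ (principal_mono.2 fun z hz => hS ▸ ⟨hz.1, hz.2.trans hα'⟩))
  refine (by simpa using tendsto_const_nhds.add hlogDeriv :
    Tendsto (fun z => β + z * logDeriv g z) _ (𝓝 β)).congr' ?_
  filter_upwards [hball, hgT, eventually_lt_norm_inf_principal 0 T] with z hzU hgz hz
  have hzS : z ∈ interior S := hzU (mem_ball_self (by positivity))
  rw [mul_div_assoc, ← logDeriv_apply, mul_logDeriv_eq_add_mul_logDeriv_div hlam (norm_pos_iff.1 hz)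
    (hLderiv z hzS) (hf.differentiableAt (mem_interior_iff_mem_nhds.1 hzS))
    fun h => hgz (by simp [g, h])]

open Filter in
/-- If `f` is holomorphic on the sector `S = {|z| > r, |arg(z e^{-iθ})| < α}` (`0 < α < π`)
and `f(z) ~ λ z^β` there (for a fixed continuous branch `z^β = exp(β L z)`, `L` a branch of
log on `S`), then `f'(z) ~ (β/z) f(z)`, i.e. `z f'(z)/f(z) → β`, as `|z| → ∞` in any
subsector of half-opening `α' < α`. -/
theorem stmt_10 (r θ α : ℝ) (hα : 0 < α) (hαπ : α < Real.pi)
    (f L : ℂ → ℂ) (lam β : ℂ) (hlam : lam ≠ 0)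
    (S : Set ℂ)
    (hS : S = {z : ℂ | r < ‖z‖ ∧
      |Complex.arg (z * Complex.exp (-(θ : ℂ) * Complex.I))| < α})
    (hf : DifferentiableOn ℂ f S)
    (hLc : ContinuousOn L S) (hL : ∀ z ∈ S, Complex.exp (L z) = z)
    (hasym : Tendsto (fun z => f z / (lam * Complex.exp (β * L z)))
      (comap (fun z : ℂ => ‖z‖) atTop ⊓ 𝓟 S) (nhds 1)) :
    ∀ α' : ℝ, α' < α →
      Tendsto (fun z => z * deriv f z / f z)
        (comap (fun z : ℂ => ‖z‖) atTop ⊓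
          𝓟 {z : ℂ | r < ‖z‖ ∧
            |Complex.arg (z * Complex.exp (-(θ : ℂ) * Complex.I))| < α'})
        (nhds β) :=
  stmt_10_general r θ α f L lam β hlam S hS hf hLc hL hasym
end
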